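/- Let S be a strictly positive (a.s.) integrable random variable on a probability space with m := 1 − E[S] ∈ (0,1), fix T > 0, and let n be the unique real number with N(n) = m. Set G(x) := E[S·1_{S ≥ e^x}] and assume there exist ε > 0, C > 0 and x₀ such that G(x) ≤ C·e^{−εx} for all x ≥ x₀. Let I : ℝ → [0,∞) satisfy P_BS(x, I(x)) = E[(e^x − S)₊] for all x ∈ ℝ, and define Φ(x) := I(x) − √(2x/T) − n/√T − n²/(2√(2Tx)) for x > 0. Then limsup_{x→∞} √(2Tx)·|Φ(x)| ≤ 1. -/

import Mathlib

open MeasureTheory Filter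

/-- Standard normal cumulative distribution function. -/
noncomputable def stdNormalCDF (y : ℝ) : ℝ :=
  ∫ t in Set.Iic y, Real.exp (-t ^ 2 / 2) / Real.sqrt (2 * Real.pi)

/-- Black-Scholes d₊ (maturity `T`, log-strike `x`, volatility `σ`). -/
noncomputable def dplus (T x σ : ℝ) : ℝ := -x / (σ * Real.sqrt T) + σ * Real.sqrt T / 2

/-- Black-Scholes d₋ (maturity `T`, log-strike `x`, volatility `σ`). -/
noncomputable def dminus (T x σ : ℝ) : ℝ := -x / (σ * Real.sqrt T) - σ * Real.sqrt T / 2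

/-- Black-Scholes Call price (maturity `T`, log-strike `x`, volatility `σ`),
with the convention `CBS T x 0 = max (1 - exp x) 0`. -/
noncomputable def CBS (T x σ : ℝ) : ℝ :=
  if σ = 0 then max (1 - Real.exp x) 0
  else stdNormalCDF (dplus T x σ) - Real.exp x * stdNormalCDF (dminus T x σ)

/-- Black-Scholes Put price (maturity `T`, log-strike `x`, volatility `σ`),
with the convention `PBS T x 0 = max (exp x - 1) 0`. -/
noncomputable def PBS (T x σ : ℝ) : ℝ :=
  if σ = 0 then max (Real.exp x - 1) 0
  else Real.exp x * stdNormalCDF (-dminus T x σ) - stdNormalCDF (-dplus T x σ)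

/-!
Write `δ = d₊(x, I x)` and `D = -d₋(x, I x) = √(δ² + 2x)`, so that `I x · √T = δ + D`.
By put–call parity the pricing equation becomes `N(δ) = N(n) + R(x) + eˣ N(-D)`, where
`R(x) = E[(S - eˣ)₊] ≤ G(x)` decays exponentially. The Mills ratio bound `N(-y) ≤ φ(y)/y` gives
`eˣ N(-D) ≤ φ(δ)/√(2x)`, so `δ ↓ n`, and comparing `N(δ) - N(n)` with the minimum of `φ` on
`[n, δ]` yields `√(2x) (δ - n) ≤ (√(2x) R(x) + φ(δ)) / φ(max |n| |δ|) → 1`. Expanding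
`δ + √(δ² + 2x)` around `√(2x) + n + n²/(2√(2x))` costs only `O(δ - n) + O(1/x)` more.
-/

open Set Real ProbabilityTheory Topology

noncomputable def stdNormalPDF (t : ℝ) : ℝ := exp (-t ^ 2 / 2) / √(2 * π)

lemma stdNormalPDF_eq_gaussianPDFReal : stdNormalPDF = gaussianPDFReal 0 1 := by
  ext t
  simp [stdNormalPDF, gaussianPDFReal, div_eq_inv_mul]

lemma stdNormalPDF_pos (t : ℝ) : 0 < stdNormalPDF t := by
  rw [stdNormalPDF_eq_gaussianPDFReal]
  exact gaussianPDFReal_pos _ _ _ one_ne_zero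

lemma integrable_stdNormalPDF : Integrable stdNormalPDF := by
  rw [stdNormalPDF_eq_gaussianPDFReal]
  exact integrable_gaussianPDFReal _ _

lemma integral_stdNormalPDF : ∫ t, stdNormalPDF t = 1 := by
  rw [stdNormalPDF_eq_gaussianPDFReal]
  exact integral_gaussianPDFReal_eq_one _ one_ne_zero

lemma continuous_stdNormalPDF : Continuous stdNormalPDF := by
  unfold stdNormalPDF
  fun_prop

lemma stdNormalPDF_abs (t : ℝ) : stdNormalPDF |t| = stdNormalPDF t := by
  simp [stdNormalPDF]

lemma stdNormalPDF_neg (t : ℝ) : stdNormalPDF (-t) = stdNormalPDF t := by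
  simp [stdNormalPDF]

lemma stdNormalPDF_le_of_abs_le {s t : ℝ} (h : |s| ≤ |t|) : stdNormalPDF t ≤ stdNormalPDF s := by
  unfold stdNormalPDF
  gcongr exp ?_ / _
  linarith [sq_le_sq.2 h]

lemma hasDerivAt_stdNormalPDF (t : ℝ) : HasDerivAt stdNormalPDF (-t * stdNormalPDF t) t := by
  have h : HasDerivAt (fun s : ℝ => -s ^ 2 / 2) (-t) t :=
    ((hasDerivAt_pow 2 t).neg.div_const 2).congr_deriv (by norm_num; ring)
  exact (h.exp.div_const _).congr_deriv (by rw [stdNormalPDF]; ring)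

lemma integrable_mul_stdNormalPDF : Integrable fun t => t * stdNormalPDF t := by
  have h := (integrable_mul_exp_neg_mul_sq (b := 1 / 2) (by norm_num)).div_const (√(2 * π))
  refine h.congr (Eventually.of_forall fun t => ?_)
  simp only [stdNormalPDF]
  ring_nf

lemma stdNormalCDF_eq_integral (y : ℝ) :
    stdNormalCDF y = ∫ t in Iic y, stdNormalPDF t := rfl

lemma stdNormalCDF_sub_stdNormalCDF {a b : ℝ} (hab : a ≤ b) :
    stdNormalCDF b - stdNormalCDF a = ∫ t in Ioc a b, stdNormalPDF t := by
  rw [stdNormalCDF_eq_integral, stdNormalCDF_eq_integral, ← Iic_union_Ioc_eq_Iic hab,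
    setIntegral_union (Iic_disjoint_Ioc le_rfl) measurableSet_Ioc
      integrable_stdNormalPDF.integrableOn integrable_stdNormalPDF.integrableOn]
  ring

lemma mul_sub_le_stdNormalCDF_sub {a b c : ℝ} (hab : a ≤ b)
    (hc : ∀ t ∈ Ioc a b, c ≤ stdNormalPDF t) :
    c * (b - a) ≤ stdNormalCDF b - stdNormalCDF a := by
  rw [stdNormalCDF_sub_stdNormalCDF hab]
  have := setIntegral_ge_of_const_le measurableSet_Ioc (by simp) hc
    integrable_stdNormalPDF.integrableOn
  rwa [Real.volume_real_Ioc_of_le hab, smul_eq_mul, mul_comm] at this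

lemma stdNormalPDF_max_abs_le {a b t : ℝ} (ht : t ∈ Ioc a b) :
    stdNormalPDF (max |a| |b|) ≤ stdNormalPDF t :=
  stdNormalPDF_le_of_abs_le <| (abs_le_max_abs_abs ht.1.le ht.2).trans (le_abs_self _)

lemma strictMono_stdNormalCDF : StrictMono stdNormalCDF := fun a b hab => by
  have := mul_sub_le_stdNormalCDF_sub hab.le fun t => stdNormalPDF_max_abs_le
  nlinarith [stdNormalPDF_pos (max |a| |b|)]

lemma stdNormalCDF_pos (y : ℝ) : 0 < stdNormalCDF y :=
  (setIntegral_nonneg measurableSet_Iic fun t _ => (stdNormalPDF_pos t).le).trans_lt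
    (strictMono_stdNormalCDF (sub_one_lt y))

lemma stdNormalCDF_neg (y : ℝ) : stdNormalCDF (-y) = 1 - stdNormalCDF y := by
  have hsplit := setIntegral_union (Iic_disjoint_Ioi (le_refl y)) measurableSet_Ioi
    integrable_stdNormalPDF.integrableOn integrable_stdNormalPDF.integrableOn
  rw [Iic_union_Ioi, setIntegral_univ, integral_stdNormalPDF] at hsplit
  have hreflect : stdNormalCDF (-y) = ∫ t in Ioi y, stdNormalPDF t := by
    rw [stdNormalCDF_eq_integral, ← integral_comp_neg_Ioi]
    simp only [stdNormalPDF_neg]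
  rw [hreflect, stdNormalCDF_eq_integral]
  linarith

lemma stdNormalCDF_neg_le_stdNormalPDF_div {y : ℝ} (hy : 0 < y) :
    stdNormalCDF (-y) ≤ stdNormalPDF y / y := by
  have hint : Integrable fun t => -t * stdNormalPDF t := by
    simpa only [neg_mul] using integrable_mul_stdNormalPDF.fun_neg
  have hlim : Tendsto stdNormalPDF atBot (𝓝 0) :=
    tendsto_zero_of_hasDerivAt_of_integrableOn_Iic (a := 0)
      (fun t _ => hasDerivAt_stdNormalPDF t) hint.integrableOn
      integrable_stdNormalPDF.integrableOn
  have hmoment : ∫ t in Iic (-y), -t * stdNormalPDF t = stdNormalPDF y := by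
    rw [integral_Iic_of_hasDerivAt_of_tendsto' (fun t _ => hasDerivAt_stdNormalPDF t)
      hint.integrableOn hlim, stdNormalPDF_neg, sub_zero]
  calc stdNormalCDF (-y) = ∫ t in Iic (-y), stdNormalPDF t := rfl
    _ ≤ ∫ t in Iic (-y), -t * stdNormalPDF t / y := by
      refine setIntegral_mono_on integrable_stdNormalPDF.integrableOn
        (hint.div_const y).integrableOn measurableSet_Iic fun t ht => ?_
      rw [le_div_iff₀ hy]
      have : y ≤ -t := by linarith [mem_Iic.1 ht]
      nlinarith [stdNormalPDF_pos t]
    _ = stdNormalPDF y / y := by rw [integral_div, hmoment]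

section Payoff

variable {Ω : Type*} [MeasurableSpace Ω] {μ : Measure Ω} {S : Ω → ℝ}

lemma integral_max_sub_zero_eq [IsProbabilityMeasure μ] (hS : Integrable S μ) (c : ℝ) :
    ∫ ω, max (c - S ω) 0 ∂μ = c - ∫ ω, S ω ∂μ + ∫ ω, max (S ω - c) 0 ∂μ := by
  have hpointwise : ∀ ω, max (c - S ω) 0 = (c - S ω) + max (S ω - c) 0 := fun ω => by
    rcases le_total (S ω) c with h | h <;> simp [h]
  have hput : Integrable (fun ω => c - S ω) μ := (integrable_const c).sub hS
  have hcall : Integrable (fun ω => max (S ω - c) 0) μ := (hS.sub (integrable_const c)).pos_part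
  simp_rw [hpointwise]
  rw [integral_add hput hcall, integral_sub (integrable_const c) hS, integral_const,
    probReal_univ, one_smul]

lemma integral_max_sub_zero_le_setIntegral (hS : Integrable S μ) {c : ℝ} (hc : 0 ≤ c) :
    ∫ ω, max (S ω - c) 0 ∂μ ≤ ∫ ω in {ω | c ≤ S ω}, S ω ∂μ := by
  have hset : NullMeasurableSet {ω | c ≤ S ω} μ :=
    nullMeasurableSet_le aemeasurable_const hS.1.aemeasurable
  rw [← integral_indicator₀ hset]
  refine integral_mono_of_nonneg (ae_of_all _ fun ω => le_max_right _ _) (hS.indicator₀ hset)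
    (ae_of_all _ fun ω => ?_)
  by_cases h : c ≤ S ω
  · rw [indicator_of_mem (show ω ∈ {ω | c ≤ S ω} from h)]
    exact max_le (by linarith) (hc.trans h)
  · simp [indicator_of_notMem (show ω ∉ {ω | c ≤ S ω} from h), (not_le.1 h).le]

end Payoff

section BlackScholes

variable {T x σ : ℝ}

lemma neg_dminus_eq_sqrt (hT : 0 < T) (hσ : 0 < σ) (hx : 0 ≤ x) :
    -dminus T x σ = √(dplus T x σ ^ 2 + 2 * x) := by
  have hu : 0 < σ * √T := mul_pos hσ (sqrt_pos.2 hT)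
  symm
  have hxu : 0 ≤ x / (σ * √T) := div_nonneg hx hu.le
  rw [sqrt_eq_iff_eq_sq (by positivity) (by rw [dminus, neg_div]; linarith)]
  unfold dplus dminus
  field_simp
  ring

lemma mul_sqrt_eq_dplus_add_sqrt (hT : 0 < T) (hσ : 0 < σ) (hx : 0 ≤ x) :
    σ * √T = dplus T x σ + √(dplus T x σ ^ 2 + 2 * x) := by
  rw [← neg_dminus_eq_sqrt hT hσ hx, dplus, dminus]
  ring

lemma pos_of_PBS_eq {m R : ℝ} (hσ : 0 ≤ σ) (hx : 0 ≤ x) (hm : 0 < m) (hR : 0 ≤ R)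
    (h : PBS T x σ = exp x - (1 - m) + R) : 0 < σ := by
  refine hσ.lt_of_ne fun hσ0 => ?_
  rw [PBS, if_pos hσ0.symm, max_eq_left (by linarith [one_le_exp hx])] at h
  linarith

lemma stdNormalCDF_dplus_eq {m R : ℝ} (hT : 0 < T) (hσ : 0 < σ) (hx : 0 ≤ x)
    (h : PBS T x σ = exp x - (1 - m) + R) :
    stdNormalCDF (dplus T x σ) =
      m + R + exp x * stdNormalCDF (-√(dplus T x σ ^ 2 + 2 * x)) := by
  rw [PBS, if_neg hσ.ne', neg_dminus_eq_sqrt hT hσ hx, stdNormalCDF_neg (dplus T x σ)] at h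
  linear_combination h - exp x * stdNormalCDF_neg √(dplus T x σ ^ 2 + 2 * x)

end BlackScholes

lemma exp_mul_stdNormalCDF_neg_sqrt_le {x : ℝ} (hx : 0 < x) (δ : ℝ) :
    exp x * stdNormalCDF (-√(δ ^ 2 + 2 * x)) ≤ stdNormalPDF δ / √(2 * x) := by
  have hs : 0 < √(2 * x) := sqrt_pos.2 (by linarith)
  have hsD : √(2 * x) ≤ √(δ ^ 2 + 2 * x) := sqrt_le_sqrt (by nlinarith)
  have hexp : exp x * stdNormalPDF √(δ ^ 2 + 2 * x) = stdNormalPDF δ := by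
    rw [stdNormalPDF, stdNormalPDF, sq_sqrt (by positivity), ← mul_div_assoc, ← exp_add]
    ring_nf
  calc exp x * stdNormalCDF (-√(δ ^ 2 + 2 * x))
      ≤ exp x * (stdNormalPDF √(δ ^ 2 + 2 * x) / √(δ ^ 2 + 2 * x)) := by
        gcongr
        exact stdNormalCDF_neg_le_stdNormalPDF_div (hs.trans_le hsD)
    _ = stdNormalPDF δ / √(δ ^ 2 + 2 * x) := by rw [← hexp, mul_div_assoc]
    _ ≤ stdNormalPDF δ / √(2 * x) :=
        div_le_div_of_nonneg_left (stdNormalPDF_pos δ).le hs hsD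

lemma sqrt_mul_sub_le_of_stdNormalCDF_eq {x δ n R : ℝ} (hx : 0 < x) (hnδ : n ≤ δ)
    (h : stdNormalCDF δ = stdNormalCDF n + R + exp x * stdNormalCDF (-√(δ ^ 2 + 2 * x))) :
    √(2 * x) * (δ - n) ≤ (√(2 * x) * R + stdNormalPDF δ) / stdNormalPDF (max |n| |δ|) := by
  have hs : 0 < √(2 * x) := sqrt_pos.2 (by linarith)
  have hlow := mul_sub_le_stdNormalCDF_sub hnδ fun t ht => stdNormalPDF_max_abs_le ht
  have hmills := exp_mul_stdNormalCDF_neg_sqrt_le hx δ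
  rw [le_div_iff₀ (stdNormalPDF_pos _)]
  calc √(2 * x) * (δ - n) * stdNormalPDF (max |n| |δ|)
      = √(2 * x) * (stdNormalPDF (max |n| |δ|) * (δ - n)) := by ring
    _ ≤ √(2 * x) * (R + stdNormalPDF δ / √(2 * x)) := by gcongr; linarith
    _ = √(2 * x) * R + stdNormalPDF δ := by field_simp

lemma sqrt_mul_abs_add_sqrt_sub_le {x δ n : ℝ} (hx : 0 < x) (hnδ : n ≤ δ) :
    √(2 * x) * |δ + √(δ ^ 2 + 2 * x) - (√(2 * x) + n + n ^ 2 / (2 * √(2 * x)))|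
      ≤ √(2 * x) * (δ - n) + |δ ^ 2 - n ^ 2| / 2 + n ^ 2 * δ ^ 2 / (16 * x) := by
  set s := √(2 * x)
  set D := √(δ ^ 2 + 2 * x)
  have hs : 0 < s := sqrt_pos.2 (by linarith)
  have hs2 : s ^ 2 = 2 * x := sq_sqrt (by linarith)
  have hD2 : D ^ 2 = δ ^ 2 + 2 * x := sq_sqrt (by positivity)
  have hsD : s ≤ D := sqrt_le_sqrt (by nlinarith)
  have hDs : 0 < D + s := by linarith
  -- rests on `D - s = δ ^ 2 / (D + s)`
  have hdecomp : δ + D - (s + n + n ^ 2 / (2 * s))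
      = (δ - n) + (δ ^ 2 - n ^ 2) / (D + s) - n ^ 2 * δ ^ 2 / ((D + s) ^ 2 * (2 * s)) := by
    have hδ2 : δ ^ 2 = D ^ 2 - s ^ 2 := by linarith
    rw [hδ2]
    field_simp
    ring
  have hmid : s * (|δ ^ 2 - n ^ 2| / (D + s)) ≤ |δ ^ 2 - n ^ 2| / 2 := by
    rw [← mul_div_assoc, div_le_div_iff₀ hDs two_pos]
    nlinarith [abs_nonneg (δ ^ 2 - n ^ 2)]
  have hlast : s * (n ^ 2 * δ ^ 2 / ((D + s) ^ 2 * (2 * s))) ≤ n ^ 2 * δ ^ 2 / (16 * x) := by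
    rw [show s * (n ^ 2 * δ ^ 2 / ((D + s) ^ 2 * (2 * s))) = n ^ 2 * δ ^ 2 / (2 * (D + s) ^ 2) by
      field_simp]
    exact div_le_div_of_nonneg_left (by positivity) (by positivity) (by nlinarith)
  calc s * |δ + D - (s + n + n ^ 2 / (2 * s))|
      ≤ s * ((δ - n) + |δ ^ 2 - n ^ 2| / (D + s) + n ^ 2 * δ ^ 2 / ((D + s) ^ 2 * (2 * s))) := by
        rw [hdecomp]
        gcongr
        have h₁ := abs_sub (δ - n + (δ ^ 2 - n ^ 2) / (D + s)) (n ^ 2 * δ ^ 2 / ((D + s) ^ 2 * (2 * s)))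
        have h₂ := abs_add_le (δ - n) ((δ ^ 2 - n ^ 2) / (D + s))
        rw [abs_of_nonneg (by positivity : 0 ≤ n ^ 2 * δ ^ 2 / ((D + s) ^ 2 * (2 * s)))] at h₁
        rw [abs_of_nonneg (sub_nonneg.2 hnδ), abs_div, abs_of_pos hDs] at h₂
        linarith
    _ ≤ s * (δ - n) + |δ ^ 2 - n ^ 2| / 2 + n ^ 2 * δ ^ 2 / (16 * x) := by
        rw [mul_add, mul_add]
        linarith

lemma tendsto_of_tendsto_stdNormalCDF {α : Type*} {l : Filter α} {f : α → ℝ} {a : ℝ}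
    (h : Tendsto (fun x => stdNormalCDF (f x)) l (𝓝 (stdNormalCDF a))) : Tendsto f l (𝓝 a) :=
  tendsto_order.2
    ⟨fun _ hb => (h.eventually (lt_mem_nhds (strictMono_stdNormalCDF hb))).mono
        fun _ hx => strictMono_stdNormalCDF.lt_iff_lt.1 hx,
      fun _ hb => (h.eventually (gt_mem_nhds (strictMono_stdNormalCDF hb))).mono
        fun _ hx => strictMono_stdNormalCDF.lt_iff_lt.1 hx⟩

lemma eventually_lt_and_tendsto_of_stdNormalCDF_eq {δ R : ℝ → ℝ} {n : ℝ}
    (hR0 : ∀ᶠ x in atTop, 0 ≤ R x) (hR : Tendsto (fun x => √(2 * x) * R x) atTop (𝓝 0))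
    (hδ : ∀ᶠ x in atTop, stdNormalCDF (δ x) =
      stdNormalCDF n + R x + exp x * stdNormalCDF (-√(δ x ^ 2 + 2 * x))) :
    (∀ᶠ x in atTop, n < δ x) ∧ Tendsto δ atTop (𝓝 n) := by
  have hgap : ∀ᶠ x in atTop, 0 < stdNormalCDF (δ x) - stdNormalCDF n ∧
      stdNormalCDF (δ x) - stdNormalCDF n ≤ √(2 * x) * R x + stdNormalPDF 0 / √(2 * x) := by
    filter_upwards [hR0, hδ, eventually_ge_atTop (1 / 2)] with x hR0x hδx hx
    have hs : 1 ≤ √(2 * x) := one_le_sqrt.2 (by linarith)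
    have hmills := exp_mul_stdNormalCDF_neg_sqrt_le (x := x) (by linarith) (δ x)
    have hpdf : stdNormalPDF (δ x) / √(2 * x) ≤ stdNormalPDF 0 / √(2 * x) :=
      div_le_div_of_nonneg_right (stdNormalPDF_le_of_abs_le (by simp)) (by positivity)
    have hpos := mul_pos (exp_pos x) (stdNormalCDF_pos (-√(δ x ^ 2 + 2 * x)))
    have hRle : R x ≤ √(2 * x) * R x := le_mul_of_one_le_left hR0x hs
    rw [hδx]
    constructor <;> linarith
  refine ⟨hgap.mono fun x hx => strictMono_stdNormalCDF.lt_iff_lt.1 (sub_pos.1 hx.1),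
    tendsto_of_tendsto_stdNormalCDF ?_⟩
  have hupper : Tendsto (fun x => stdNormalCDF n + (√(2 * x) * R x + stdNormalPDF 0 / √(2 * x)))
      atTop (𝓝 (stdNormalCDF n)) := by
    simpa using tendsto_const_nhds.add
      (hR.add ((tendsto_sqrt_atTop.comp (tendsto_id.const_mul_atTop two_pos)).const_div_atTop _))
  exact tendsto_of_tendsto_of_tendsto_of_le_of_le' tendsto_const_nhds hupper
    (hgap.mono fun x hx => by linarith [hx.1]) (hgap.mono fun x hx => by linarith [hx.2])

lemma limsup_sqrt_mul_abs_add_sqrt_sub_le_one {δ R : ℝ → ℝ} {n : ℝ}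
    (hR0 : ∀ᶠ x in atTop, 0 ≤ R x) (hR : Tendsto (fun x => √(2 * x) * R x) atTop (𝓝 0))
    (hδ : ∀ᶠ x in atTop, stdNormalCDF (δ x) =
      stdNormalCDF n + R x + exp x * stdNormalCDF (-√(δ x ^ 2 + 2 * x))) :
    limsup (fun x => √(2 * x) *
      |δ x + √(δ x ^ 2 + 2 * x) - (√(2 * x) + n + n ^ 2 / (2 * √(2 * x)))|) atTop ≤ 1 := by
  obtain ⟨hnδ, hδn⟩ := eventually_lt_and_tendsto_of_stdNormalCDF_eq hR0 hR hδ
  have hmain : Tendsto (fun x => (√(2 * x) * R x + stdNormalPDF (δ x)) /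
      stdNormalPDF (max |n| |δ x|)) atTop (𝓝 1) := by
    have hnum := hR.add ((continuous_stdNormalPDF.tendsto n).comp hδn)
    have hden := (continuous_stdNormalPDF.tendsto (max |n| |n|)).comp
      (tendsto_const_nhds.max hδn.abs)
    rw [max_self, stdNormalPDF_abs] at hden
    have hquot := hnum.div hden (stdNormalPDF_pos n).ne'
    rwa [zero_add, div_self (stdNormalPDF_pos n).ne'] at hquot
  have hsquare : Tendsto (fun x => |δ x ^ 2 - n ^ 2| / 2) atTop (𝓝 0) := by
    have h := (((hδn.pow 2).sub_const (n ^ 2)).abs).div_const 2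
    rwa [sub_self, abs_zero, zero_div] at h
  have hcross : Tendsto (fun x => n ^ 2 * δ x ^ 2 / (16 * x)) atTop (𝓝 0) :=
    ((hδn.pow 2).const_mul (n ^ 2)).div_atTop (tendsto_id.const_mul_atTop (by norm_num))
  have hbound := (hmain.add hsquare).add hcross
  rw [add_zero, add_zero] at hbound
  refine (limsup_le_limsup ?_ (isCoboundedUnder_le_of_le atTop fun x => by positivity)
    hbound.isBoundedUnder_le).trans hbound.limsup_eq.le
  filter_upwards [eventually_gt_atTop 0, hnδ, hδ] with x hx hnδx hδx
  have := sqrt_mul_sub_le_of_stdNormalCDF_eq hx hnδx.le hδx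
  exact (sqrt_mul_abs_add_sqrt_sub_le hx hnδx.le).trans (by linarith)

lemma tendsto_sqrt_mul_of_le_mul_exp {R : ℝ → ℝ} {C ε : ℝ} (hε : 0 < ε)
    (hR0 : ∀ᶠ x in atTop, 0 ≤ R x) (hR : ∀ᶠ x in atTop, R x ≤ C * exp (-ε * x)) :
    Tendsto (fun x => √(2 * x) * R x) atTop (𝓝 0) := by
  have hlim : Tendsto (fun x : ℝ => √2 * C * (x ^ (1 / 2 : ℝ) * exp (-ε * x))) atTop (𝓝 0) := by
    simpa using (tendsto_rpow_mul_exp_neg_mul_atTop_nhds_zero _ ε hε).const_mul (√2 * C)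
  refine squeeze_zero' ?_ ?_ hlim
  · filter_upwards [hR0] with x hx using by positivity
  · filter_upwards [hR, eventually_ge_atTop 0] with x hRx hx
    rw [sqrt_mul zero_le_two, sqrt_eq_rpow x]
    calc √2 * x ^ (1 / 2 : ℝ) * R x ≤ √2 * x ^ (1 / 2 : ℝ) * (C * exp (-ε * x)) := by gcongr
      _ = _ := by ring

lemma sqrt_two_mul_mul_abs_sub_eq {T x : ℝ} (hT : 0 < T) (hx : 0 < x) (σ n : ℝ) :
    √(2 * T * x) * |σ - √(2 * x / T) - n / √T - n ^ 2 / (2 * √(2 * T * x))|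
      = √(2 * x) * |σ * √T - (√(2 * x) + n + n ^ 2 / (2 * √(2 * x)))| := by
  have hT' : 0 < √T := sqrt_pos.2 hT
  have hx' : 0 < √(2 * x) := sqrt_pos.2 (by linarith)
  rw [show 2 * T * x = T * (2 * x) by ring, sqrt_mul hT.le, sqrt_div' _ hT.le,
    show σ - √(2 * x) / √T - n / √T - n ^ 2 / (2 * (√T * √(2 * x)))
      = (σ * √T - (√(2 * x) + n + n ^ 2 / (2 * √(2 * x)))) / √T by field_simp; ring,
    abs_div, abs_of_pos hT']
  field_simp

theorem iv_right_wing_higher_order_exp_general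
    {Ω : Type*} [MeasurableSpace Ω] (μ : Measure Ω) [IsProbabilityMeasure μ]
    (S : Ω → ℝ) (hSint : Integrable S μ)
    (m : ℝ) (hm : m = 1 - ∫ ω, S ω ∂μ) (hm0 : 0 < m)
    (T : ℝ) (hT : 0 < T) (n : ℝ) (hn : stdNormalCDF n = m)
    (ε C x₀ : ℝ) (hε : 0 < ε)
    (hG : ∀ x : ℝ, x₀ ≤ x →
      (∫ ω in {ω | Real.exp x ≤ S ω}, S ω ∂μ) ≤ C * Real.exp (-ε * x))
    (I : ℝ → ℝ) (hInonneg : ∀ x, 0 ≤ I x)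
    (hI : ∀ x : ℝ, PBS T x (I x) = ∫ ω, max (Real.exp x - S ω) 0 ∂μ)
    (Φ : ℝ → ℝ)
    (hΦ : ∀ x : ℝ, Φ x = I x - Real.sqrt (2 * x / T) - n / Real.sqrt T
      - n ^ 2 / (2 * Real.sqrt (2 * T * x))) :
    limsup (fun x => Real.sqrt (2 * T * x) * |Φ x|) atTop ≤ 1 := by
  set R : ℝ → ℝ := fun x => ∫ ω, max (S ω - exp x) 0 ∂μ
  have hR0 : ∀ x, 0 ≤ R x := fun x => integral_nonneg fun ω => le_max_right _ _
  have hput : ∀ x, PBS T x (I x) = exp x - (1 - m) + R x := fun x => by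
    rw [hI x, integral_max_sub_zero_eq hSint, hm]
    ring
  have hIpos : ∀ x, 0 ≤ x → 0 < I x := fun x hx =>
    pos_of_PBS_eq (hInonneg x) hx hm0 (hR0 x) (hput x)
  have hRlim : Tendsto (fun x => √(2 * x) * R x) atTop (𝓝 0) :=
    tendsto_sqrt_mul_of_le_mul_exp hε (Eventually.of_forall hR0)
      ((eventually_ge_atTop x₀).mono fun x hx =>
        (integral_max_sub_zero_le_setIntegral hSint (exp_pos x).le).trans (hG x hx))
  have hδ : ∀ᶠ x in atTop, stdNormalCDF (dplus T x (I x)) = stdNormalCDF n + R x +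
      exp x * stdNormalCDF (-√(dplus T x (I x) ^ 2 + 2 * x)) :=
    (eventually_ge_atTop 0).mono fun x hx => by
      rw [hn]
      exact stdNormalCDF_dplus_eq hT (hIpos x hx) hx (hput x)
  refine le_of_eq_of_le (limsup_congr ?_)
    (limsup_sqrt_mul_abs_add_sqrt_sub_le_one (Eventually.of_forall hR0) hRlim hδ)
  filter_upwards [eventually_gt_atTop 0] with x hx
  rw [hΦ x, sqrt_two_mul_mul_abs_sub_eq hT hx,
    mul_sqrt_eq_dplus_add_sqrt hT (hIpos x hx.le) hx.le]

/-- higher-order right-wing expansion of the Put-implied volatility under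
the exponential tail condition `G(x) ≤ C·e^{-εx}`, where `G(x) = E[S·1_{S ≥ eˣ}]`. -/
theorem iv_right_wing_higher_order_exp
    {Ω : Type*} [MeasurableSpace Ω] (μ : Measure Ω) [IsProbabilityMeasure μ]
    (S : Ω → ℝ) (hSpos : ∀ᵐ ω ∂μ, 0 < S ω) (hSint : Integrable S μ)
    (m : ℝ) (hm : m = 1 - ∫ ω, S ω ∂μ) (hm0 : 0 < m) (hm1 : m < 1)
    (T : ℝ) (hT : 0 < T) (n : ℝ) (hn : stdNormalCDF n = m)
    (ε C x₀ : ℝ) (hε : 0 < ε) (hC : 0 < C)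
    (hG : ∀ x : ℝ, x₀ ≤ x →
      (∫ ω in {ω | Real.exp x ≤ S ω}, S ω ∂μ) ≤ C * Real.exp (-ε * x))
    (I : ℝ → ℝ) (hInonneg : ∀ x, 0 ≤ I x)
    (hI : ∀ x : ℝ, PBS T x (I x) = ∫ ω, max (Real.exp x - S ω) 0 ∂μ)
    (Φ : ℝ → ℝ)
    (hΦ : ∀ x : ℝ, Φ x = I x - Real.sqrt (2 * x / T) - n / Real.sqrt T
      - n ^ 2 / (2 * Real.sqrt (2 * T * x))) :
    limsup (fun x => Real.sqrt (2 * T * x) * |Φ x|) atTop ≤ 1 :=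
  iv_right_wing_higher_order_exp_general μ S hSint m hm hm0 T hT n hn ε C x₀ hε hG I hInonneg hI Φ
    hΦ
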